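/- Let G ∈ ℝ^{N×N} be symmetric and positive semidefinite, and let t₀ > 0. Every trajectory q : [t₀, ∞) → ℝ^N of the NAGD game dynamics q''(t) + (3/t) q'(t) + G q(t) = 0 satisfies: the velocity q'(t) → 0 as t → ∞, and q(t) converges to a limit q^∞ lying in the null space of G; moreover, the orthogonal projection of q(t) onto the orthogonal complement of the null space of G is O(t^{-3/2}): there is C ≥ 0 with ‖q(t) − P_{N(G)} q(t)‖₂ ≤ C t^{-3/2} for all t ≥ t₀, where P_{N(G)} is the orthogonal projection onto N(G) = {x : Gx = 0}. -/

import Mathlib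

/-!
Let `P` be the orthogonal projection onto `ker G`. Since `G` is symmetric, `P G = 0 = G P`, so
`P q` solves the free equation `p'' + (3/t) p' = 0`: `t³ (P q)'` is constant and `P q` converges.
The remainder `r = q - P q` solves the original equation and lies in `(ker G)ᗮ`, where
`⟪r, G r⟫ ≥ μ ‖r‖²` for some `μ > 0`. Along `r` the Lyapunov function
`H = t³‖r'‖² + 3t²⟪r, r'⟫ + (3/2)t‖r‖² + t³⟪r, G r⟫` has `H' = (3/2)‖r‖²`, and completing the
square, `H = t‖t r' + (3/2) r‖² - (3/4)t‖r‖² + t³⟪r, G r⟫ ≥ (μ/2) t³‖r‖²` once `μt² ≥ 3/2`.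
Hence `H' ≤ 3H / (μt³)`, so `H e^{3/(2μt²)}` is nonincreasing and `H` stays bounded, which bounds
both `t³‖r‖²` and `t³‖r'‖²`.
-/

open Filter

noncomputable def e2norm {N : ℕ} (x : Fin N → ℝ) : ℝ := Real.sqrt (∑ i, x i ^ 2)

/-- NAGD game dynamics: `q` is a twice continuously differentiable trajectory with
velocity `v = q'` satisfying `q'' + (3/t) q' + G q = 0` on `[t₀, ∞)`. -/
def IsNAGDTrajectory {N : ℕ} (G : Matrix (Fin N) (Fin N) ℝ) (t₀ : ℝ)
    (q v : ℝ → Fin N → ℝ) : Prop :=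
  (∀ t, t₀ ≤ t → HasDerivAt q (v t) t) ∧
  (∀ t, t₀ ≤ t → HasDerivAt v (-(3 / t) • v t - G.mulVec (q t)) t)

open Topology Set
open scoped RealInnerProductSpace

theorem eq_of_hasDerivAt_zero_of_le {E : Type*} [NormedAddCommGroup E] [NormedSpace ℝ E]
    {f : ℝ → E} {a t : ℝ} (hf : ∀ s, a ≤ s → HasDerivAt f 0 s) (ht : a ≤ t) : f t = f a :=
  constant_of_has_deriv_right_zero (fun s hs => (hf s hs.1).continuousAt.continuousWithinAt)
    (fun s hs => (hf s hs.1).hasDerivWithinAt) t ⟨ht, le_rfl⟩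

theorem le_mul_exp_of_hasDerivAt_le_mul_div_cube {H H' : ℝ → ℝ} {a c : ℝ} (ha : 0 < a)
    (hc : 0 ≤ c) (hH : ∀ t, a ≤ t → HasDerivAt H (H' t) t)
    (hH' : ∀ t, a ≤ t → H' t ≤ 2 * c / t ^ 3 * H t) (hH0 : ∀ t, a ≤ t → 0 ≤ H t) {t : ℝ}
    (ht : a ≤ t) : H t ≤ H a * Real.exp (c / a ^ 2) := by
  set φ : ℝ → ℝ := fun s => H s * Real.exp (c / s ^ 2)
  have hφ' : ∀ s, a ≤ s →
      HasDerivAt φ ((H' s - 2 * c / s ^ 3 * H s) * Real.exp (c / s ^ 2)) s := by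
    intro s hs
    have hs0 : s ≠ 0 := (ha.trans_le hs).ne'
    have hexp : HasDerivAt (fun s : ℝ => Real.exp (c / s ^ 2))
        (Real.exp (c / s ^ 2) * (-(2 * c) / s ^ 3)) s := by
      refine (((hasDerivAt_pow 2 s).fun_inv (pow_ne_zero 2 hs0)).const_mul c).exp.congr_deriv ?_
      field_simp
      ring
    exact ((hH s hs).mul hexp).congr_deriv (by ring)
  have hφ : AntitoneOn φ (Ici a) := by
    refine antitoneOn_of_hasDerivWithinAt_nonpos (convex_Ici a)
      (fun s hs => (hφ' s hs).continuousAt.continuousWithinAt)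
      (fun s hs => (hφ' s (interior_subset hs)).hasDerivWithinAt) fun s hs => ?_
    have hs : a ≤ s := interior_subset hs
    exact mul_nonpos_of_nonpos_of_nonneg (sub_nonpos.2 (hH' s hs)) (Real.exp_pos _).le
  calc H t ≤ φ t := le_mul_of_one_le_right (hH0 t ht) (Real.one_le_exp (by positivity))
    _ ≤ φ a := hφ (mem_Ici.2 le_rfl) ht ht

theorem norm_le_sqrt_mul_rpow_of_cube_mul_sq_le {E : Type*} [SeminormedAddCommGroup E] {x : E}
    {t K : ℝ} (ht : 0 < t) (h : t ^ 3 * ‖x‖ ^ 2 ≤ K) : ‖x‖ ≤ √K * t ^ (-(3 : ℝ) / 2) := by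
  have hrpow : t ^ (-(3 : ℝ) / 2) = √((t ^ 3)⁻¹) := by
    rw [Real.sqrt_eq_rpow, ← Real.rpow_natCast, ← Real.rpow_neg_one, ← Real.rpow_mul ht.le,
      ← Real.rpow_mul ht.le]
    norm_num
  rw [hrpow, ← Real.sqrt_mul' _ (by positivity), ← Real.sqrt_sq (norm_nonneg x)]
  refine Real.sqrt_le_sqrt ?_
  rw [← div_eq_mul_inv, le_div_iff₀ (by positivity)]
  linarith

theorem exists_norm_le_mul_rpow_of_continuousOn {E : Type*} [SeminormedAddCommGroup E] {f : ℝ → E}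
    {t₀ T C s : ℝ} (ht₀ : 0 < t₀) (hT : t₀ ≤ T) (hs : 0 ≤ s) (hf : ContinuousOn f (Icc t₀ T))
    (hC : ∀ t, T ≤ t → ‖f t‖ ≤ C * t ^ (-s)) :
    ∃ C' : ℝ, 0 ≤ C' ∧ ∀ t, t₀ ≤ t → ‖f t‖ ≤ C' * t ^ (-s) := by
  obtain ⟨B, hB⟩ := isCompact_Icc.exists_bound_of_continuousOn hf
  have hT0 : 0 < T := ht₀.trans_le hT
  refine ⟨max C (max B 0 * T ^ s), le_max_of_le_right (by positivity), fun t ht => ?_⟩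
  have ht0 : 0 < t := ht₀.trans_le ht
  have hpow : 0 ≤ t ^ (-s) := by positivity
  rcases le_total T t with hTt | htT
  · exact (hC t hTt).trans (mul_le_mul_of_nonneg_right (le_max_left _ _) hpow)
  · have hone : 1 ≤ T ^ s * t ^ (-s) := by
      rw [Real.rpow_neg ht0.le, ← div_eq_mul_inv, one_le_div (by positivity)]
      exact Real.rpow_le_rpow ht0.le htT hs
    calc ‖f t‖ ≤ max B 0 := (hB t ⟨ht, htT⟩).trans (le_max_left _ _)
      _ ≤ max B 0 * (T ^ s * t ^ (-s)) := le_mul_of_one_le_right (le_max_right _ _) hone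
      _ = max B 0 * T ^ s * t ^ (-s) := by ring
      _ ≤ max C (max B 0 * T ^ s) * t ^ (-s) :=
        mul_le_mul_of_nonneg_right (le_max_right _ _) hpow

theorem tendsto_zero_of_norm_le_mul_rpow {E : Type*} [SeminormedAddCommGroup E] {f : ℝ → E}
    {C s : ℝ} (hs : 0 < s) (hf : ∀ᶠ t in atTop, ‖f t‖ ≤ C * t ^ (-s)) :
    Tendsto f atTop (𝓝 0) := by
  refine tendsto_zero_iff_norm_tendsto_zero.2 (squeeze_zero' (Eventually.of_forall
    fun t => norm_nonneg _) hf ?_)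
  simpa using (tendsto_rpow_neg_atTop hs).const_mul C


namespace ContinuousLinearMap.IsPositive

variable {E : Type*} [NormedAddCommGroup E] [InnerProductSpace ℝ E] {T : E →L[ℝ] E}

theorem apply_eq_zero_of_inner_self_eq_zero (hT : T.IsPositive) {x : E} (hx : ⟪x, T x⟫ = 0) :
    T x = 0 := by
  -- `s ↦ ⟪x + s • T x, T (x + s • T x)⟫` is a nonnegative quadratic without constant term
  have hquad : ∀ s : ℝ, 0 ≤ ⟪T x, T (T x)⟫ * (s * s) + 2 * ‖T x‖ ^ 2 * s + 0 := fun s => by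
    have h := hT.inner_nonneg_right (x + s • T x)
    rw [map_add, map_smul, inner_add_left, inner_add_right, inner_add_right, real_inner_smul_left,
      real_inner_smul_left, real_inner_smul_right, real_inner_smul_right, hx,
      ← hT.inner_left_eq_inner_right x (T x),
      real_inner_self_eq_norm_sq] at h
    linarith
  have h := discrim_le_zero hquad
  rw [discrim, mul_zero, sub_zero] at h
  exact norm_eq_zero.1 (pow_eq_zero_iff two_ne_zero |>.1 (by nlinarith [sq_nonneg (‖T x‖ ^ 2)]))

theorem exists_pos_mul_norm_sq_le_inner [FiniteDimensional ℝ E] (hT : T.IsPositive) :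
    ∃ μ : ℝ, 0 < μ ∧ ∀ x ∈ T.kerᗮ, μ * ‖x‖ ^ 2 ≤ ⟪x, T x⟫ := by
  set S := Metric.sphere (0 : E) 1 ∩ T.kerᗮ
  have hS : ∀ x ∈ T.kerᗮ, x ≠ 0 → ‖x‖⁻¹ • x ∈ S := fun x hx hx0 =>
    ⟨by simp [norm_smul, hx0], Submodule.smul_mem _ _ hx⟩
  have hscale : ∀ x : E, ⟪‖x‖⁻¹ • x, T (‖x‖⁻¹ • x)⟫ = ⟪x, T x⟫ / ‖x‖ ^ 2 := fun x => by
    rw [map_smul, real_inner_smul_left, real_inner_smul_right]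
    field_simp
  rcases S.eq_empty_or_nonempty with hSe | hSne
  · refine ⟨1, one_pos, fun x hx => ?_⟩
    obtain rfl : x = 0 := by_contra fun hx0 => (hSe ▸ hS x hx hx0 : ‖x‖⁻¹ • x ∈ (∅ : Set E))
    simp
  obtain ⟨z, ⟨hz1, hzK⟩, hzmin⟩ :=
    ((isCompact_sphere (0 : E) 1).inter_right (Submodule.isClosed_orthogonal _)).exists_isMinOn
      hSne (continuous_id.inner (𝕜 := ℝ) T.continuous).continuousOn
  refine ⟨⟪z, T z⟫, (hT.inner_nonneg_right z).lt_of_ne fun h => ?_, fun x hx => ?_⟩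
  · have hz0 : z = 0 := inner_self_eq_zero.1
      (hzK z (hT.apply_eq_zero_of_inner_self_eq_zero h.symm))
    simp [hz0] at hz1
  · rcases eq_or_ne x 0 with rfl | hx0
    · simp
    have h : ⟪z, T z⟫ ≤ ⟪‖x‖⁻¹ • x, T (‖x‖⁻¹ • x)⟫ := hzmin (hS x hx hx0)
    rwa [hscale, le_div_iff₀ (by positivity)] at h

theorem starProjection_ker_comp [FiniteDimensional ℝ E] (hT : T.IsPositive) :
    T.ker.starProjection ∘L T = 0 := by
  ext x
  refine (Submodule.starProjection_apply_eq_zero_iff _).2 fun u (hu : T u = 0) => ?_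
  simpa [hu] using (hT.inner_left_eq_inner_right u x).symm

end ContinuousLinearMap.IsPositive

theorem ContinuousLinearMap.comp_starProjection_ker {E : Type*} [NormedAddCommGroup E]
    [InnerProductSpace ℝ E] [FiniteDimensional ℝ E] (T : E →L[ℝ] E) :
    T ∘L T.ker.starProjection = 0 := by
  ext x
  exact LinearMap.mem_ker.1 (T.ker.starProjection_apply_mem x)

section Flow

variable {E F : Type*} [NormedAddCommGroup E] [NormedSpace ℝ E]
  [NormedAddCommGroup F] [NormedSpace ℝ F]

def IsNAGDSolution (T : E →L[ℝ] E) (t₀ : ℝ) (q v : ℝ → E) : Prop :=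
  (∀ t, t₀ ≤ t → HasDerivAt q (v t) t) ∧
  (∀ t, t₀ ≤ t → HasDerivAt v (-(3 / t) • v t - T (q t)) t)

namespace IsNAGDSolution

variable {T : E →L[ℝ] E} {t₀ : ℝ} {q v : ℝ → E}

theorem map (h : IsNAGDSolution T t₀ q v) (L : E →L[ℝ] F) {S : F →L[ℝ] F}
    (hL : L ∘L T = S ∘L L) : IsNAGDSolution S t₀ (fun t => L (q t)) (fun t => L (v t)) := by
  refine ⟨fun t ht => L.hasFDerivAt.comp_hasDerivAt t (h.1 t ht), fun t ht => ?_⟩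
  refine (L.hasFDerivAt.comp_hasDerivAt t (h.2 t ht)).congr_deriv ?_
  simp [← ContinuousLinearMap.comp_apply, hL]

theorem cube_smul_velocity_eq (h : IsNAGDSolution (0 : E →L[ℝ] E) t₀ q v) (ht₀ : 0 < t₀) {t : ℝ}
    (ht : t₀ ≤ t) : t ^ 3 • v t = t₀ ^ 3 • v t₀ := by
  refine eq_of_hasDerivAt_zero_of_le (f := fun s => s ^ 3 • v s) (fun s hs => ?_) ht
  refine ((hasDerivAt_pow 3 s).smul (h.2 s hs)).congr_deriv ?_
  have hs0 : s ≠ 0 := (ht₀.trans_le hs).ne'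
  simp only [zero_apply, sub_zero, smul_smul, ← add_smul]
  rw [← zero_smul ℝ (v s)]
  congr 1
  field_simp
  push_cast
  ring

theorem tendsto_velocity_of_zero (h : IsNAGDSolution (0 : E →L[ℝ] E) t₀ q v) (ht₀ : 0 < t₀) :
    Tendsto v atTop (𝓝 0) := by
  have hlim : Tendsto (fun t : ℝ => (t ^ 3)⁻¹ • (t₀ ^ 3 • v t₀)) atTop (𝓝 0) := by
    simpa using (tendsto_inv_atTop_zero.comp (tendsto_pow_atTop (α := ℝ) three_ne_zero)).smul_const
      (t₀ ^ 3 • v t₀)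
  refine hlim.congr' ?_
  filter_upwards [eventually_ge_atTop t₀] with t ht
  rw [← h.cube_smul_velocity_eq ht₀ ht, smul_smul,
    inv_mul_cancel₀ (pow_ne_zero 3 (ht₀.trans_le ht).ne'), one_smul]

theorem exists_tendsto_of_zero (h : IsNAGDSolution (0 : E →L[ℝ] E) t₀ q v) (ht₀ : 0 < t₀) :
    ∃ l, Tendsto q atTop (𝓝 l) := by
  set c := t₀ ^ 3 • v t₀
  have hconst : ∀ t, t₀ ≤ t → q t + (2 * t ^ 2)⁻¹ • c = q t₀ + (2 * t₀ ^ 2)⁻¹ • c := by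
    refine fun t ht =>
      eq_of_hasDerivAt_zero_of_le (f := fun s => q s + (2 * s ^ 2)⁻¹ • c) (fun s hs => ?_) ht
    have hs0 : s ≠ 0 := (ht₀.trans_le hs).ne'
    have hinv : HasDerivAt (fun s : ℝ => (2 * s ^ 2)⁻¹) (-(s ^ 3)⁻¹) s := by
      refine (((hasDerivAt_pow 2 s).const_mul 2).fun_inv (by positivity)).congr_deriv ?_
      field_simp
      ring
    refine ((h.1 s hs).add (hinv.smul_const c)).congr_deriv ?_
    rw [show c = s ^ 3 • v s from (h.cube_smul_velocity_eq ht₀ hs).symm, smul_smul,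
      neg_mul, inv_mul_cancel₀ (pow_ne_zero 3 hs0), neg_smul, one_smul, add_neg_cancel]
  refine ⟨q t₀ + (2 * t₀ ^ 2)⁻¹ • c, ?_⟩
  have hlim : Tendsto (fun t : ℝ => q t₀ + (2 * t₀ ^ 2)⁻¹ • c - (2 * t ^ 2)⁻¹ • c) atTop
      (𝓝 (q t₀ + (2 * t₀ ^ 2)⁻¹ • c)) := by
    have h2 : Tendsto (fun t : ℝ => (2 * t ^ 2)⁻¹) atTop (𝓝 0) :=
      tendsto_inv_atTop_zero.comp ((tendsto_pow_atTop (α := ℝ) two_ne_zero).const_mul_atTop two_pos)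
    simpa using tendsto_const_nhds.sub (h2.smul_const c)
  refine hlim.congr' ?_
  filter_upwards [eventually_ge_atTop t₀] with t ht
  rw [← hconst t ht, add_sub_cancel_right]

end IsNAGDSolution

end Flow

section Lyapunov

variable {E : Type*} [NormedAddCommGroup E] [InnerProductSpace ℝ E] (T : E →L[ℝ] E)

noncomputable def nagdLyapunov (t : ℝ) (x y : E) : ℝ :=
  t ^ 3 * ‖y‖ ^ 2 + 3 * t ^ 2 * ⟪x, y⟫ + 3 / 2 * t * ‖x‖ ^ 2 + t ^ 3 * ⟪x, T x⟫

variable {T}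

theorem IsNAGDSolution.hasDerivAt_nagdLyapunov {t₀ : ℝ} {q v : ℝ → E}
    (h : IsNAGDSolution T t₀ q v) (hT : (T : E →ₗ[ℝ] E).IsSymmetric) {t : ℝ} (ht₀ : 0 < t₀)
    (ht : t₀ ≤ t) :
    HasDerivAt (fun s => nagdLyapunov T s (q s) (v s)) (3 / 2 * ‖q t‖ ^ 2) t := by
  have ht0 : t ≠ 0 := (ht₀.trans_le ht).ne'
  have hq := h.1 t ht
  have hv := h.2 t ht
  have hTq : HasDerivAt (fun s => T (q s)) (T (v t)) t := T.hasFDerivAt.comp_hasDerivAt t hq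
  refine (((((hasDerivAt_pow 3 t).mul hv.norm_sq).add
    (((hasDerivAt_pow 2 t).const_mul 3).mul (hq.inner ℝ hv))).add
    (((hasDerivAt_id t).const_mul (3 / 2)).mul hq.norm_sq)).add
    ((hasDerivAt_pow 3 t).mul (hq.inner ℝ hTq))).congr_deriv ?_
  have hTv : ⟪q t, T (v t)⟫ = ⟪v t, T (q t)⟫ := by
    rw [real_inner_comm]
    exact hT (v t) (q t)
  simp only [inner_sub_right, real_inner_smul_right, real_inner_self_eq_norm_sq, hTv, id]
  field_simp
  push_cast
  ring

theorem nagdLyapunov_eq (t : ℝ) (x y : E) :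
    nagdLyapunov T t x y =
      t * ‖t • y + (3 / 2 : ℝ) • x‖ ^ 2 - 3 / 4 * t * ‖x‖ ^ 2 + t ^ 3 * ⟪x, T x⟫ := by
  rw [nagdLyapunov, norm_add_sq_real, norm_smul, norm_smul, real_inner_smul_left,
    real_inner_smul_right, real_inner_comm, Real.norm_eq_abs, Real.norm_eq_abs, mul_pow, mul_pow,
    sq_abs, sq_abs]
  ring

theorem half_mul_cube_mul_norm_sq_le_nagdLyapunov {μ t : ℝ} {x y : E} (ht : 0 ≤ t)
    (hx : μ * ‖x‖ ^ 2 ≤ ⟪x, T x⟫) (hμt : 3 / 2 ≤ μ * t ^ 2) :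
    μ / 2 * (t ^ 3 * ‖x‖ ^ 2) ≤ nagdLyapunov T t x y := by
  rw [nagdLyapunov_eq]
  have h1 : 0 ≤ t * ‖t • y + (3 / 2 : ℝ) • x‖ ^ 2 := by positivity
  have h2 := mul_le_mul_of_nonneg_left hx (pow_nonneg ht 3)
  have h3 := mul_le_mul_of_nonneg_right hμt (mul_nonneg ht (sq_nonneg ‖x‖))
  nlinarith

theorem cube_mul_norm_sq_le_nagdLyapunov {t : ℝ} {x y : E} (ht : 0 ≤ t) (hx : 0 ≤ ⟪x, T x⟫) :
    t ^ 3 * ‖y‖ ^ 2 ≤ 2 * nagdLyapunov T t x y + 6 * t * ‖x‖ ^ 2 := by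
  have h : 0 ≤ t * ‖t • y + (3 : ℝ) • x‖ ^ 2 := by positivity
  rw [norm_add_sq_real, norm_smul, norm_smul, real_inner_smul_left, real_inner_smul_right,
    Real.norm_eq_abs, Real.norm_eq_abs, mul_pow, mul_pow, sq_abs, sq_abs] at h
  rw [nagdLyapunov, real_inner_comm y x]
  nlinarith [mul_nonneg (pow_nonneg ht 3) hx]

end Lyapunov

namespace IsNAGDSolution

variable {E : Type*} [NormedAddCommGroup E] [InnerProductSpace ℝ E] {T : E →L[ℝ] E}
  {t₀ μ : ℝ} {q v : ℝ → E}

theorem exists_cube_mul_norm_sq_le_of_coercive (h : IsNAGDSolution T t₀ q v) (hT : T.IsPositive)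
    (ht₀ : 0 < t₀) (hμ : 0 < μ) (hcoer : ∀ t, t₀ ≤ t → μ * ‖q t‖ ^ 2 ≤ ⟪q t, T (q t)⟫) :
    ∃ a, t₀ ≤ a ∧ ∃ K, ∀ t, a ≤ t → t ^ 3 * ‖q t‖ ^ 2 ≤ K ∧ t ^ 3 * ‖v t‖ ^ 2 ≤ K := by
  set a := max t₀ √(3 / (2 * μ))
  have ha : t₀ ≤ a := le_max_left _ _
  have ha₀ : 0 < a := ht₀.trans_le ha
  have hμa : ∀ t, a ≤ t → 3 / 2 ≤ μ * t ^ 2 := fun t ht => by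
    have h := (Real.sqrt_le_left (ha₀.trans_le ht).le).1 ((le_max_right _ _).trans ht)
    rw [div_le_iff₀ (by positivity)] at h
    linarith
  set H := fun t => nagdLyapunov T t (q t) (v t)
  have hHlow : ∀ t, a ≤ t → μ / 2 * (t ^ 3 * ‖q t‖ ^ 2) ≤ H t := fun t ht =>
    half_mul_cube_mul_norm_sq_le_nagdLyapunov (ha₀.trans_le ht).le (hcoer t (ha.trans ht))
      (hμa t ht)
  set K := H a * Real.exp (3 / (2 * μ) / a ^ 2)
  have hHK : ∀ t, a ≤ t → H t ≤ K := by
    refine fun t ht => le_mul_exp_of_hasDerivAt_le_mul_div_cube ha₀ (by positivity)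
      (fun s hs => h.hasDerivAt_nagdLyapunov hT.isSymmetric ht₀ (ha.trans hs))
      (fun s hs => ?_) (fun s hs => le_trans ?_ (hHlow s hs)) ht
    · have hs₀ : 0 < s := ha₀.trans_le hs
      calc 3 / 2 * ‖q s‖ ^ 2 = 3 / (μ * s ^ 3) * (μ / 2 * (s ^ 3 * ‖q s‖ ^ 2)) := by
            field_simp
        _ ≤ 3 / (μ * s ^ 3) * H s := by gcongr; exact hHlow s hs
        _ = 2 * (3 / (2 * μ)) / s ^ 3 * H s := by field_simp
    · have hs₀ : 0 < s := ha₀.trans_le hs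
      positivity
  -- `μ t² ≥ 3/2` turns `μ t³ ‖q‖² ≤ 2K` into `6 t ‖q‖² ≤ 8K`, so `t³ ‖v‖² ≤ 2K + 8K`
  refine ⟨a, ha, max (2 * K / μ) (10 * K), fun t ht => ⟨?_, ?_⟩⟩
  · refine le_max_of_le_left ?_
    rw [le_div_iff₀ hμ]
    linarith [hHlow t ht, hHK t ht]
  · have ht₀' : 0 < t := ha₀.trans_le ht
    have hv := cube_mul_norm_sq_le_nagdLyapunov (T := T) (y := v t) ht₀'.le
      (hT.inner_nonneg_right (q t))
    have hq := mul_le_mul_of_nonneg_right (hμa t ht) (mul_nonneg ht₀'.le (sq_nonneg ‖q t‖))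
    refine le_max_of_le_right ?_
    nlinarith [hHlow t ht, hHK t ht]

theorem exists_norm_le_mul_rpow_of_coercive (h : IsNAGDSolution T t₀ q v) (hT : T.IsPositive)
    (ht₀ : 0 < t₀) (hμ : 0 < μ) (hcoer : ∀ t, t₀ ≤ t → μ * ‖q t‖ ^ 2 ≤ ⟪q t, T (q t)⟫) :
    ∃ C, 0 ≤ C ∧ ∀ t, t₀ ≤ t → ‖q t‖ ≤ C * t ^ (-(3 : ℝ) / 2) := by
  obtain ⟨a, ha, K, hK⟩ := h.exists_cube_mul_norm_sq_le_of_coercive hT ht₀ hμ hcoer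
  have hbound : ∀ t, a ≤ t → ‖q t‖ ≤ √K * t ^ (-(3 : ℝ) / 2) := fun t ht =>
    norm_le_sqrt_mul_rpow_of_cube_mul_sq_le (ht₀.trans_le (ha.trans ht)) (hK t ht).1
  simp only [neg_div] at hbound ⊢
  exact exists_norm_le_mul_rpow_of_continuousOn ht₀ ha (by norm_num)
    (fun t ht => (h.1 t ht.1).continuousAt.continuousWithinAt) hbound

theorem tendsto_velocity_of_coercive (h : IsNAGDSolution T t₀ q v) (hT : T.IsPositive)
    (ht₀ : 0 < t₀) (hμ : 0 < μ) (hcoer : ∀ t, t₀ ≤ t → μ * ‖q t‖ ^ 2 ≤ ⟪q t, T (q t)⟫) :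
    Tendsto v atTop (𝓝 0) := by
  obtain ⟨a, ha, K, hK⟩ := h.exists_cube_mul_norm_sq_le_of_coercive hT ht₀ hμ hcoer
  refine tendsto_zero_of_norm_le_mul_rpow (C := √K) (s := 3 / 2) (by norm_num) ?_
  filter_upwards [eventually_ge_atTop a] with t ht
  simpa [neg_div] using
    norm_le_sqrt_mul_rpow_of_cube_mul_sq_le (ht₀.trans_le (ha.trans ht)) (hK t ht).2

theorem tendsto_of_isPositive [FiniteDimensional ℝ E] (h : IsNAGDSolution T t₀ q v)
    (hT : T.IsPositive) (ht₀ : 0 < t₀) :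
    Tendsto v atTop (𝓝 0) ∧ (∃ l ∈ T.ker, Tendsto q atTop (𝓝 l)) ∧
      ∃ C, 0 ≤ C ∧ ∀ t, t₀ ≤ t → ‖q t - T.ker.starProjection (q t)‖ ≤ C * t ^ (-(3 : ℝ) / 2) := by
  set P := T.ker.starProjection
  -- the motion splits into a free motion in `ker T` and a coercive one in `(ker T)ᗮ`
  have hker := h.map P (S := 0) (by rw [hT.starProjection_ker_comp, ContinuousLinearMap.zero_comp])
  have hperp := h.map (ContinuousLinearMap.id ℝ E - P) (S := T) (by
    rw [ContinuousLinearMap.sub_comp, ContinuousLinearMap.comp_sub, hT.starProjection_ker_comp,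
      T.comp_starProjection_ker, ContinuousLinearMap.id_comp, ContinuousLinearMap.comp_id,
      sub_zero])
  simp only [sub_apply, ContinuousLinearMap.id_apply] at hperp
  obtain ⟨μ, hμ, hcoer⟩ := hT.exists_pos_mul_norm_sq_le_inner
  have hcoer' : ∀ t, t₀ ≤ t → μ * ‖q t - P (q t)‖ ^ 2 ≤ ⟪q t - P (q t), T (q t - P (q t))⟫ :=
    fun t _ => hcoer _ (T.ker.sub_starProjection_mem_orthogonal (q t))
  obtain ⟨C, hC, hbound⟩ := hperp.exists_norm_le_mul_rpow_of_coercive hT ht₀ hμ hcoer'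
  obtain ⟨l, hl⟩ := hker.exists_tendsto_of_zero ht₀
  have hqperp : Tendsto (fun t => q t - P (q t)) atTop (𝓝 0) :=
    tendsto_zero_of_norm_le_mul_rpow (s := 3 / 2) (by norm_num)
      ((eventually_ge_atTop t₀).mono fun t ht => by simpa [neg_div] using hbound t ht)
  refine ⟨?_, ⟨l, ?_, ?_⟩, C, hC, hbound⟩
  · simpa using (hker.tendsto_velocity_of_zero ht₀).add
      (hperp.tendsto_velocity_of_coercive hT ht₀ hμ hcoer')
  · exact (ContinuousLinearMap.isClosed_ker T).mem_of_tendsto hl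
      (Eventually.of_forall fun t => T.ker.starProjection_apply_mem (q t))
  · simpa using hl.add hqperp

end IsNAGDSolution

theorem e2norm_ofLp {N : ℕ} (x : EuclideanSpace ℝ (Fin N)) : e2norm (WithLp.ofLp x) = ‖x‖ := by
  simp [e2norm, EuclideanSpace.norm_eq]

theorem Matrix.isPositive_toEuclideanCLM {n : Type*} [Fintype n] [DecidableEq n]
    {G : Matrix n n ℝ} (hsymm : G.transpose = G)
    (hpsd : ∀ x : n → ℝ, 0 ≤ dotProduct x (G.mulVec x)) :
    (Matrix.toEuclideanCLM (𝕜 := ℝ) G).IsPositive :=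
  Matrix.isPositive_toEuclideanLin_iff.2 <| Matrix.posSemidef_iff_dotProduct_mulVec.2
    ⟨by rwa [Matrix.IsHermitian, Matrix.conjTranspose_eq_transpose_of_trivial], by simpa using hpsd⟩

theorem IsNAGDTrajectory.isNAGDSolution_toLp {N : ℕ} {G : Matrix (Fin N) (Fin N) ℝ} {t₀ : ℝ}
    {q v : ℝ → Fin N → ℝ} (h : IsNAGDTrajectory G t₀ q v) :
    IsNAGDSolution (Matrix.toEuclideanCLM (𝕜 := ℝ) G) t₀ (fun t => WithLp.toLp 2 (q t))
      (fun t => WithLp.toLp 2 (v t)) := by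
  set L := (EuclideanSpace.equiv (Fin N) ℝ).symm
  refine ⟨fun t ht => L.hasFDerivAt.comp_hasDerivAt t (h.1 t ht), fun t ht => ?_⟩
  exact (L.hasFDerivAt.comp_hasDerivAt t (h.2 t ht)).congr_deriv (by simp [L])

/-- for `G` symmetric positive semidefinite, every NAGD trajectory satisfies
`q'(t) → 0`, `q(t) → q^∞ ∈ N(G)`, and the component of `q(t)` orthogonal to the null
space `N(G)` (i.e. `q(t) - P_{N(G)} q(t)`) is bounded by `C t^{-3/2}`. -/
theorem stmt_7 {N : ℕ} (G : Matrix (Fin N) (Fin N) ℝ)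
    (hsymm : G.transpose = G)
    (hpsd : ∀ x : Fin N → ℝ, 0 ≤ dotProduct x (G.mulVec x))
    (t₀ : ℝ) (ht₀ : 0 < t₀)
    (q v : ℝ → Fin N → ℝ) (htraj : IsNAGDTrajectory G t₀ q v) :
    Tendsto v atTop (nhds 0) ∧
    (∃ qinf : Fin N → ℝ, G.mulVec qinf = 0 ∧ Tendsto q atTop (nhds qinf)) ∧
    (∃ C : ℝ, 0 ≤ C ∧ ∀ t, t₀ ≤ t → ∃ p r : Fin N → ℝ,
      q t = p + r ∧ G.mulVec p = 0 ∧
      (∀ z : Fin N → ℝ, G.mulVec z = 0 → dotProduct r z = 0) ∧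
      e2norm r ≤ C * t ^ (-(3 : ℝ) / 2)) := by
  set A := Matrix.toEuclideanCLM (𝕜 := ℝ) G
  obtain ⟨hv, ⟨l, hlK, hl⟩, C, hC, hbound⟩ :=
    htraj.isNAGDSolution_toLp.tendsto_of_isPositive
      (Matrix.isPositive_toEuclideanCLM hsymm hpsd) ht₀
  have hofLp := PiLp.continuous_ofLp 2 (fun _ : Fin N => ℝ)
  refine ⟨by simpa [Function.comp_def] using (hofLp.tendsto 0).comp hv,
    ⟨WithLp.ofLp l, congrArg WithLp.ofLp hlK,
      by simpa [Function.comp_def] using (hofLp.tendsto l).comp hl⟩,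
    C, hC, fun t ht => ?_⟩
  set x := WithLp.toLp 2 (q t)
  refine ⟨WithLp.ofLp (A.ker.starProjection x), WithLp.ofLp (x - A.ker.starProjection x),
    by simp [x], congrArg WithLp.ofLp (A.ker.starProjection_apply_mem x), fun z hz => ?_,
    (e2norm_ofLp _).trans_le (hbound t ht)⟩
  have hzK : WithLp.toLp 2 z ∈ A.ker := by simp [A, hz]
  simpa [EuclideanSpace.inner_eq_star_dotProduct] using
    A.ker.sub_starProjection_mem_orthogonal x _ hzK
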